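/- Let A be a strongly connected almost-group automaton with dangling state p₀ and let D be the stable class containing p₀. Then every stable class has cardinality |D| or |D| - 1. -/

import Mathlib

/-!
Each letter maps a stable class into a stable class, and every letter is injective on `Q \ {p₀}`
(for `a₀` because its periodic points are exactly `Q \ {p₀}`). Hence along a transition the size of
the stable class never decreases, except when leaving `D`, where it drops by at most one (only `p₀`
can be merged). Following a path from `q` to `p₀` gives `|[q]| ≤ |D|`, and a path from `p₀` to `q`
gives `|D| - 1 ≤ |[q]|`.
-/

/-- The stability relation: `p` and `q` are stable iff for every word `u`
there is a word `v` with `p·uv = q·uv`. -/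
def Stable {Q A : Type*} (δ : Q → A → Q) (p q : Q) : Prop :=
  ∀ u : List A, ∃ v : List A, (u ++ v).foldl δ p = (u ++ v).foldl δ q

open Function Set

namespace Stable

variable {Q A : Type*} {δ : Q → A → Q} {p q r : Q}

theorem symm (h : Stable δ p q) : Stable δ q p :=
  fun u => (h u).imp fun _ hv => hv.symm

theorem trans (hpq : Stable δ p q) (hqr : Stable δ q r) : Stable δ p r := by
  intro u
  obtain ⟨v, hv⟩ := hpq u
  obtain ⟨w, hw⟩ := hqr (u ++ v)
  refine ⟨v ++ w, ?_⟩
  simp only [← List.append_assoc, List.foldl_append] at hv hw ⊢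
  rw [hv, hw]

theorem apply (h : Stable δ p q) (a : A) : Stable δ (δ p a) (δ q a) :=
  fun u => h (a :: u)

end Stable

section StableClass

variable {Q A : Type*} {δ : Q → A → Q}

def stableClass (δ : Q → A → Q) (q : Q) : Set Q := {x | Stable δ x q}

theorem stableClass_eq_of_stable {p q : Q} (h : Stable δ p q) :
    stableClass δ p = stableClass δ q :=
  Set.ext fun _ => ⟨fun hx => hx.trans h, fun hx => hx.trans h.symm⟩

theorem mapsTo_stableClass (q : Q) (a : A) :
    MapsTo (δ · a) (stableClass δ q) (stableClass δ (δ q a)) :=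
  fun _ hx => hx.apply a

variable [Finite Q] {p₀ : Q} (hinj : ∀ a, InjOn (δ · a) {p₀}ᶜ)
include hinj

theorem ncard_stableClass_sdiff_le (s : Q) (a : A) :
    (stableClass δ s \ {p₀}).ncard ≤ (stableClass δ (δ s a)).ncard :=
  ncard_le_ncard_of_injOn _ (fun _ hx => mapsTo_stableClass s a hx.1)
    ((hinj a).mono fun _ hx => hx.2)

theorem ncard_stableClass_le_apply {s : Q} (hs : ¬Stable δ s p₀) (a : A) :
    (stableClass δ s).ncard ≤ (stableClass δ (δ s a)).ncard := by
  have hp₀ : p₀ ∉ stableClass δ s := fun h => hs h.symm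
  simpa [sdiff_singleton_eq_self hp₀] using ncard_stableClass_sdiff_le hinj s a

theorem ncard_stableClass_le_of_foldl_eq {u : List A} {q : Q} (hu : u.foldl δ q = p₀) :
    (stableClass δ q).ncard ≤ (stableClass δ p₀).ncard := by
  induction u generalizing q with
  | nil => rw [← hu]; rfl
  | cons a u ih =>
    by_cases hq : Stable δ q p₀
    · rw [stableClass_eq_of_stable hq]
    · exact (ncard_stableClass_le_apply hinj hq a).trans (ih hu)

theorem pred_ncard_stableClass_le_foldl (u : List A) {s : Q}
    (hs : (stableClass δ p₀).ncard - 1 ≤ (stableClass δ s).ncard) :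
    (stableClass δ p₀).ncard - 1 ≤ (stableClass δ (u.foldl δ s)).ncard := by
  induction u generalizing s with
  | nil => exact hs
  | cons a u ih =>
    apply ih
    by_cases hsp : Stable δ s p₀
    · rw [← stableClass_eq_of_stable hsp]
      exact (pred_ncard_le_ncard_sdiff_singleton _ p₀).trans (ncard_stableClass_sdiff_le hinj s a)
    · exact hs.trans (ncard_stableClass_le_apply hinj hsp a)

end StableClass

theorem injOn_compl_singleton_of_card_periodicPts {α : Type*} [Finite α] {f : α → α} {p₀ : α}
    (hcard : Nat.card (periodicPts f) = Nat.card α - 1) (hp₀ : p₀ ∉ periodicPts f) :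
    InjOn f {p₀}ᶜ := by
  have hper : periodicPts f = {p₀}ᶜ :=
    eq_of_subset_of_ncard_le (fun _ hx hx₀ => hp₀ (hx₀ ▸ hx))
      (by rw [ncard_compl, ncard_singleton, ← hcard, Nat.card_coe_set_eq])
  exact hper ▸ (bijOn_periodicPts f).injOn

/-- In a strongly connected almost-group automaton with dangling state `p₀`,
letting `D` be the stable class of `p₀`, every stable class has cardinality
`|D|` or `|D| - 1`. -/
theorem stmt_12 {Q A : Type*} [Finite Q] (δ : Q → A → Q) (a₀ : A) (p₀ : Q)
    (hperm : ∀ a : A, a ≠ a₀ → Function.Bijective fun q => δ q a)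
    (hcyc : Nat.card (Function.periodicPts fun q => δ q a₀) = Nat.card Q - 1)
    (hp₀ : p₀ ∉ Function.periodicPts fun q => δ q a₀)
    (hsc : ∀ p q : Q, ∃ u : List A, u.foldl δ p = q) :
    ∀ q : Q, Nat.card {x : Q | Stable δ x q} = Nat.card {x : Q | Stable δ x p₀} ∨
      Nat.card {x : Q | Stable δ x q} = Nat.card {x : Q | Stable δ x p₀} - 1 := by
  have hinj : ∀ a, InjOn (δ · a) {p₀}ᶜ := fun a => by
    rcases eq_or_ne a a₀ with rfl | ha
    · exact injOn_compl_singleton_of_card_periodicPts hcyc hp₀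
    · exact (hperm a ha).injective.injOn
  intro q
  obtain ⟨u, hu⟩ := hsc q p₀
  obtain ⟨v, hv⟩ := hsc p₀ q
  have hle := ncard_stableClass_le_of_foldl_eq hinj hu
  have hge := hv ▸ pred_ncard_stableClass_le_foldl hinj v (Nat.sub_le _ 1)
  show (stableClass δ q).ncard = (stableClass δ p₀).ncard ∨
    (stableClass δ q).ncard = (stableClass δ p₀).ncard - 1
  omega
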